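/- Let X be a real normed space partially ordered by a nontrivial pointed convex cone C, and let A ⊆ X. Assume that C is closed and that (C, C_α) has the strict separation property for every 0 < α < 1. If A is weakly compact, then Min(A, C) ⊆ closure(GHe(A, C)). -/

import Mathlib

open Set Metric Pointwise

namespace HenigPaper

variable {X : Type*} [NormedAddCommGroup X] [NormedSpace ℝ X]

/-- `C` is a cone: closed under multiplication by nonnegative scalars. -/
def IsCone (C : Set X) : Prop :=
  ∀ ⦃l : ℝ⦄, 0 ≤ l → ∀ ⦃x⦄, x ∈ C → l • x ∈ C

/-- `C` is a nontrivial cone: `{0} ⊊ C ⊊ X`. -/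
def NontrivialCone (C : Set X) : Prop :=
  IsCone C ∧ ({(0 : X)} : Set X) ⊂ C ∧ C ≠ Set.univ

/-- A cone is pointed if `(-C) ∩ C = {0}`. -/
def PointedCone' (C : Set X) : Prop := (-C) ∩ C = ({(0 : X)} : Set X)

/-- Convexity of a cone in the sense `C + C = C`. -/
def ConeConvex (C : Set X) : Prop := C + C = C

/-- The strict separation property (SSP) for the pair of cones `(C, K)`. -/
def SSP (C K : Set X) : Prop :=
  (0 : X) ∉ closure (convexHull ℝ (C ∩ sphere (0 : X) 1) -
    convexHull ℝ ((frontier K ∩ sphere (0 : X) 1) ∪ {(0 : X)}))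

/-- The Bishop–Phelps cone `C(f, α) = {x : f x ≥ α ‖x‖}`. -/
def BPCone (f : X →L[ℝ] ℝ) (α : ℝ) : Set X := {x : X | α * ‖x‖ ≤ f x}

/-- The sublevel set `S(f, α) = {x : f x + α ‖x‖ ≤ 0}`. -/
def Ssub (f : X →L[ℝ] ℝ) (α : ℝ) : Set X := {x : X | f x + α * ‖x‖ ≤ 0}

/-- `f ∈ C^#`: strictly positive functionals on `C`. -/
def StrictlyPos (C : Set X) (f : X →L[ℝ] ℝ) : Prop :=
  ∀ x ∈ C, x ≠ 0 → 0 < f x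

/-- `(f, α) ∈ C^{a*}`: the augmented dual cone. -/
def MemAugDual (C : Set X) (f : X →L[ℝ] ℝ) (α : ℝ) : Prop :=
  StrictlyPos C f ∧ 0 ≤ α ∧ ∀ x ∈ C, α * ‖x‖ ≤ f x

/-- `(f, α) ∈ C^{a#}_+`. -/
def MemAugDualSharpPlus (C : Set X) (f : X →L[ℝ] ℝ) (α : ℝ) : Prop :=
  StrictlyPos C f ∧ 0 < α ∧ ∀ x ∈ C, x ≠ 0 → α * ‖x‖ < f x

/-- `B` is a base for the cone `C`. -/
def IsBase (C B : Set X) : Prop :=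
  B.Nonempty ∧ Convex ℝ B ∧ B ⊆ C ∧ (0 : X) ∉ closure B ∧
    ∀ x ∈ C, x ≠ (0 : X) → ∃! p : ℝ × X, 0 < p.1 ∧ p.2 ∈ B ∧ x = p.1 • p.2

/-- The cone `C` has a bounded base. -/
def HasBoundedBase (C : Set X) : Prop :=
  ∃ B : Set X, IsBase C B ∧ Bornology.IsBounded B

/-- The cone generated by a set `A`. -/
def coneGen (A : Set X) : Set X := {y : X | ∃ l : ℝ, 0 ≤ l ∧ ∃ a ∈ A, y = l • a}

/-- The `ε`-conic neighbourhood `C_ε` of a cone `C`. -/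
def epsCone (C : Set X) (ε : ℝ) : Set X :=
  coneGen {x : X | infDist x (C ∩ sphere (0 : X) 1) ≤ ε}

/-- `δ_B = inf {‖b‖ : b ∈ B}`. -/
noncomputable def deltaB (B : Set X) : ℝ := sInf ((fun b => ‖b‖) '' B)

/-- The Henig dilating cone `C_{(B,ε)}`. -/
def henigCone (B : Set X) (ε : ℝ) : Set X :=
  coneGen {x : X | infDist x B ≤ ε}

/-- The set of efficient (Pareto minimal) points of `A` with respect to the cone `C`. -/
def MinSet (A C : Set X) : Set X :=
  {x ∈ A | (A - ({x} : Set X)) ∩ (-C) = ({(0 : X)} : Set X)}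

/-- The set of Henig global proper efficient points of `A` with respect to `C`. -/
def GHe (A C : Set X) : Set X :=
  {x : X | ∃ K : Set X, IsCone K ∧ ConeConvex K ∧ C \ {(0 : X)} ⊆ interior K ∧
    x ∈ MinSet A K}

/-- A subset of `X` is weakly compact if it is compact in the weak topology. -/
def WeaklyCompact (A : Set X) : Prop :=
  IsCompact ((toWeakSpace ℝ X) '' A)

end HenigPaper

open HenigPaper

variable {X : Type*} [NormedAddCommGroup X] [NormedSpace ℝ X]

/-!
For `0 < α < 1`, separating `0` from the set in the SSP of `(C, C_α)` gives a functional `g` and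
`β > 0` with `β ‖c‖ < g c` on `C \ {0}` and `g < β` on the unit vectors of `bd C_α`. Hence
`C \ {0} ⊆ int (BPCone g β)`, and `BPCone g β ⊆ C_α` because a segment from a point of
`BPCone g β \ C_α` to `C` would cross `bd C_α`. Minimising `g` over the weakly compact section
`A ∩ (x - BPCone g β)` yields a point `x₀`, minimal for `BPCone g β` and hence Henig proper
efficient, with `x - x₀ ∈ C_α`.

These points tend to `x` as `α → 0`. Fix one pair `(g₀, β₀)`. For small `α`, every `w ∈ C_α` has
`g₀ w ≥ β₀ ‖w‖ / 2` and lies within `η g₀ w` of `C`, where `η → 0` with `α`. If `‖x - z‖ ≥ ε`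
for such `z ∈ A` and arbitrarily small `α`, then for every `η` some `z ∈ A` satisfies
`g₀ (x - z) ≥ β₀ ε / 2` and `d(x - z, C) ≤ η g₀ (x - z)`. These conditions are convex and closed
in `z`, hence weakly closed, and nested in `η`, so weak compactness gives one `y ∈ A` meeting all
of them: `x - y ∈ C` and `g₀ (x - y) > 0`, contradicting the minimality of `x`.
-/

open Filter Topology

theorem IsPreconnected.inter_frontier_nonempty {α : Type*} [TopologicalSpace α] {s t : Set α}
    (hs : IsPreconnected s) (hst : (s ∩ t).Nonempty) (hsn : (s \ t).Nonempty) :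
    (s ∩ frontier t).Nonempty := by
  by_contra h
  have hcover : s ⊆ interior t ∪ (closure t)ᶜ := fun z hz => by
    by_cases hzc : z ∈ closure t
    · exact Or.inl (by_contra fun hzi => h ⟨z, hz, hzc, hzi⟩)
    · exact Or.inr hzc
  obtain ⟨x, hxs, hxt⟩ := hst
  obtain ⟨y, hys, hyt⟩ := hsn
  obtain ⟨z, -, hzi, hzc⟩ := hs _ _ isOpen_interior isClosed_closure.isOpen_compl hcover
    ⟨x, hxs, (hcover hxs).resolve_right (not_not.2 (subset_closure hxt))⟩
    ⟨y, hys, (hcover hys).resolve_left fun hyi => hyt (interior_subset hyi)⟩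
  exact hzc (interior_subset_closure hzi)

theorem Convex.convexOn_infDist {E : Type*} [SeminormedAddCommGroup E] [NormedSpace ℝ E]
    {s : Set E} (hs : Convex ℝ s) : ConvexOn ℝ univ (infDist · s) := by
  refine ⟨convex_univ, fun x _ y _ a b ha hb hab => ?_⟩
  rcases s.eq_empty_or_nonempty with rfl | hne
  · simp
  refine le_of_forall_pos_le_add fun δ hδ => ?_
  obtain ⟨p, hp, hxp⟩ := (infDist_lt_iff hne).1 (lt_add_of_pos_right (infDist x s) hδ)
  obtain ⟨q, hq, hyq⟩ := (infDist_lt_iff hne).1 (lt_add_of_pos_right (infDist y s) hδ)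
  calc infDist (a • x + b • y) s ≤ dist (a • x + b • y) (a • p + b • q) :=
        infDist_le_dist_of_mem (hs hp hq ha hb hab)
    _ ≤ a * dist x p + b * dist y q := by
        refine (dist_add_add_le _ _ _ _).trans_eq ?_
        rw [dist_smul₀, dist_smul₀, Real.norm_of_nonneg ha, Real.norm_of_nonneg hb]
    _ ≤ a * (infDist x s + δ) + b * (infDist y s + δ) := by gcongr
    _ = a • infDist x s + b • infDist y s + δ := by
        rw [smul_eq_mul, smul_eq_mul]; linear_combination δ * hab

theorem Convex.convex_setOf_infDist_le {E : Type*} [SeminormedAddCommGroup E] [NormedSpace ℝ E]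
    {s : Set E} (hs : Convex ℝ s) (f : E →L[ℝ] ℝ) :
    Convex ℝ {w | infDist w s ≤ f w} := by
  intro w₁ (h₁ : infDist w₁ s ≤ f w₁) w₂ (h₂ : infDist w₂ s ≤ f w₂) a b ha hb hab
  calc infDist (a • w₁ + b • w₂) s ≤ a • infDist w₁ s + b • infDist w₂ s :=
        hs.convexOn_infDist.2 trivial trivial ha hb hab
    _ ≤ a • f w₁ + b • f w₂ :=
        add_le_add (smul_le_smul_of_nonneg_left h₁ ha) (smul_le_smul_of_nonneg_left h₂ hb)
    _ = f (a • w₁ + b • w₂) := by simp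

theorem eventually_mul_lt_nhdsGT_zero (c : ℝ) {d : ℝ} (hd : 0 < d) :
    ∀ᶠ α in 𝓝[>] (0 : ℝ), c * α < d :=
  ((continuous_const_mul c).tendsto' 0 0 (mul_zero c)).mono_left nhdsWithin_le_nhds
    |>.eventually_lt_const hd

namespace HenigPaper

theorem IsCone.inv_norm_smul_mem {K : Set X} (hK : IsCone K) {x : X} (hx : x ∈ K) (hx0 : x ≠ 0) :
    ‖x‖⁻¹ • x ∈ K ∩ sphere 0 1 :=
  ⟨hK (by positivity) hx, by simpa using norm_smul_inv_norm (𝕜 := ℝ) hx0⟩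

theorem IsCone.smul_mem_frontier {K : Set X} (hK : IsCone K) {t : ℝ} (ht : 0 < t) {w : X}
    (hw : w ∈ frontier K) : t • w ∈ frontier K := by
  have hKt : (t • ·) '' K = K := by
    refine (image_subset_iff.2 fun k hk => hK ht.le hk).antisymm fun k hk => ?_
    exact ⟨t⁻¹ • k, hK (inv_nonneg.2 ht.le) hk, smul_inv_smul₀ ht.ne' k⟩
  have hw' : t • w ∈ Homeomorph.smulOfNeZero t ht.ne' '' frontier K := mem_image_of_mem _ hw
  rwa [Homeomorph.image_frontier, show ⇑(Homeomorph.smulOfNeZero t ht.ne') '' K = K from hKt]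
    at hw'

theorem IsCone.zero_mem {K : Set X} (hK : IsCone K) (hne : K.Nonempty) : (0 : X) ∈ K := by
  obtain ⟨x, hx⟩ := hne
  simpa using hK le_rfl hx

theorem IsCone.coneConvex {K : Set X} (hK : IsCone K) (hconv : Convex ℝ K) (hne : K.Nonempty) :
    ConeConvex K := by
  refine subset_antisymm ?_ fun x hx => ⟨x, hx, 0, hK.zero_mem hne, add_zero x⟩
  rintro _ ⟨x, hx, y, hy, rfl⟩
  have := hK zero_le_two (hconv hx hy one_half_pos.le one_half_pos.le (add_halves 1))
  rwa [smul_add, smul_smul, smul_smul, mul_one_div_cancel two_ne_zero, one_smul, one_smul] at this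

theorem IsCone.convex {C : Set X} (hC : IsCone C) (hconv : ConeConvex C) : Convex ℝ C :=
  fun _ hu _ hv _ _ ha hb _ => hconv ▸ Set.add_mem_add (hC ha hu) (hC hb hv)

theorem NontrivialCone.inter_sphere_nonempty {C : Set X} (hC : NontrivialCone C) :
    (C ∩ sphere 0 1).Nonempty := by
  obtain ⟨c, hc, hc0⟩ := Set.exists_of_ssubset hC.2.1
  exact ⟨_, hC.1.inv_norm_smul_mem hc hc0⟩

theorem mem_minSet_iff {E : Type*} [NormedAddCommGroup E] {A K : Set E} (hK : (0 : E) ∈ K) {x : E} :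
    x ∈ MinSet A K ↔ x ∈ A ∧ ∀ z ∈ A, x - z ∈ K → z = x := by
  refine and_congr_right fun hx => ⟨fun h z hz hxz => ?_, fun h => ?_⟩
  · have : z - x ∈ (A - {x}) ∩ -K := ⟨sub_mem_sub hz rfl, by rwa [Set.mem_neg, neg_sub]⟩
    rw [h] at this
    exact sub_eq_zero.1 this
  · refine subset_antisymm ?_ (singleton_subset_iff.2 ⟨⟨x, hx, x, rfl, sub_self x⟩, ?_⟩)
    · rintro _ ⟨⟨z, hz, _, rfl, rfl⟩, hzx⟩
      rw [Set.mem_neg, neg_sub] at hzx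
      simp [h z hz hzx]
    · simpa using hK

section BPCone

variable {g : X →L[ℝ] ℝ} {β : ℝ}

theorem BPCone.isCone : IsCone (BPCone g β) := fun l hl x (hx : β * ‖x‖ ≤ g x) => by
  show β * ‖l • x‖ ≤ g (l • x)
  rw [map_smul, norm_smul, Real.norm_of_nonneg hl, smul_eq_mul, mul_left_comm]
  exact mul_le_mul_of_nonneg_left hx hl

theorem BPCone.convex (hβ : 0 ≤ β) : Convex ℝ (BPCone g β) := by
  intro x (hx : β * ‖x‖ ≤ g x) y (hy : β * ‖y‖ ≤ g y) a b ha hb _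
  show β * ‖a • x + b • y‖ ≤ g (a • x + b • y)
  calc β * ‖a • x + b • y‖ ≤ β * (a * ‖x‖ + b * ‖y‖) := by
        gcongr
        refine (norm_add_le _ _).trans_eq ?_
        rw [norm_smul, norm_smul, Real.norm_of_nonneg ha, Real.norm_of_nonneg hb]
    _ = a * (β * ‖x‖) + b * (β * ‖y‖) := by ring
    _ ≤ a * g x + b * g y := by gcongr
    _ = g (a • x + b • y) := by simp

theorem BPCone.coneConvex (hβ : 0 ≤ β) : ConeConvex (BPCone g β) :=
  BPCone.isCone.coneConvex (BPCone.convex hβ) ⟨0, by simp [BPCone]⟩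

theorem BPCone.isClosed : IsClosed (BPCone g β) :=
  isClosed_le (by fun_prop) g.continuous

end BPCone

section WeaklyCompact

theorem isClosed_toWeakSpace_image {K : Set X} (hconv : Convex ℝ K) (hcl : IsClosed K) :
    IsClosed (toWeakSpace ℝ X '' K) := by
  rw [← closure_eq_iff_isClosed, ← hconv.toWeakSpace_closure ℝ, hcl.closure_eq]

variable {A : Set X}

theorem WeaklyCompact.inter (hA : WeaklyCompact A) {K : Set X} (hconv : Convex ℝ K)
    (hcl : IsClosed K) : WeaklyCompact (A ∩ K) := by
  rw [WeaklyCompact, image_inter (toWeakSpace ℝ X).injective]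
  exact hA.inter_right (isClosed_toWeakSpace_image hconv hcl)

theorem WeaklyCompact.exists_isMinOn (hA : WeaklyCompact A) (hne : A.Nonempty)
    (g : X →L[ℝ] ℝ) : ∃ x ∈ A, IsMinOn g A x := by
  obtain ⟨_, ⟨x, hx, rfl⟩, hmin⟩ := IsCompact.exists_isMinOn hA (hne.image _)
    (WeakBilin.eval_continuous (topDualPairing ℝ X).flip g).continuousOn
  exact ⟨x, hx, isMinOn_iff.2 fun z hz => isMinOn_iff.1 hmin _ (mem_image_of_mem _ hz)⟩

theorem WeaklyCompact.inter_iInter_nonempty {ι : Type*} (hA : WeaklyCompact A) {K : ι → Set X}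
    (hconv : ∀ i, Convex ℝ (K i)) (hcl : ∀ i, IsClosed (K i))
    (hK : ∀ u : Finset ι, (A ∩ ⋂ i ∈ u, K i).Nonempty) : (A ∩ ⋂ i, K i).Nonempty := by
  set T := toWeakSpace ℝ X
  have hT : ∀ S : Set X, T '' S = T.symm ⁻¹' S := T.image_eq_preimage_symm
  have hA' : IsCompact (T.symm ⁻¹' A) := by rw [← hT]; exact hA
  obtain ⟨w, hw⟩ := hA'.inter_iInter_nonempty (fun i => T '' K i)
    (fun i => isClosed_toWeakSpace_image (hconv i) (hcl i)) fun u => by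
      simpa only [hT, ← preimage_iInter₂, ← preimage_inter] using
        (hK u).preimage T.symm.surjective
  simp only [hT, ← preimage_iInter, ← preimage_inter] at hw
  exact ⟨T.symm w, hw⟩

end WeaklyCompact

section HenigPoints

variable {g : X →L[ℝ] ℝ} {β : ℝ} {A : Set X}

theorem mem_minSet_BPCone_of_forall_le (hβ : 0 < β) {x : X} (hx : x ∈ A)
    (hmin : ∀ z ∈ A, x - z ∈ BPCone g β → g x ≤ g z) : x ∈ MinSet A (BPCone g β) := by
  refine (mem_minSet_iff (by simp [BPCone])).2 ⟨hx, fun z hz hxz => ?_⟩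
  have hle : β * ‖x - z‖ ≤ 0 := by
    have : β * ‖x - z‖ ≤ g x - g z := by rw [← map_sub]; exact hxz
    linarith [hmin z hz hxz]
  have := le_antisymm (nonpos_of_mul_nonpos_right hle hβ) (norm_nonneg _)
  rwa [norm_eq_zero, sub_eq_zero, eq_comm] at this

theorem WeaklyCompact.exists_mem_minSet_BPCone (hA : WeaklyCompact A) (hβ : 0 < β) {x : X}
    (hx : x ∈ A) : ∃ x₀ ∈ MinSet A (BPCone g β), x - x₀ ∈ BPCone g β := by
  have hconv : Convex ℝ ((x - ·) ⁻¹' BPCone g β) :=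
    (BPCone.convex hβ.le).affine_preimage (AffineMap.const ℝ X x - AffineMap.id ℝ X)
  have hcl : IsClosed ((x - ·) ⁻¹' BPCone g β) := BPCone.isClosed.preimage (continuous_sub_left x)
  obtain ⟨x₀, ⟨hx₀A, hxx₀⟩, hmin⟩ :=
    (hA.inter hconv hcl).exists_isMinOn ⟨x, hx, by simp [BPCone]⟩ g
  refine ⟨x₀, mem_minSet_BPCone_of_forall_le hβ hx₀A fun z hz hx₀z => ?_, hxx₀⟩
  have hxz := add_mem_add (show x - x₀ ∈ BPCone g β from hxx₀) hx₀z
  rw [BPCone.coneConvex hβ.le, sub_add_sub_cancel] at hxz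
  exact isMinOn_iff.1 hmin z ⟨hz, hxz⟩

theorem mem_GHe_of_mem_minSet_BPCone {C : Set X} (hg : MemAugDualSharpPlus C g β) {x : X}
    (hx : x ∈ MinSet A (BPCone g β)) : x ∈ GHe A C :=
  ⟨BPCone g β, BPCone.isCone, BPCone.coneConvex hg.2.1.le,
    fun c hc => interior_maximal (fun _ hz => le_of_lt hz) (isOpen_lt (by fun_prop) g.continuous)
      (hg.2.2 c hc.1 hc.2), hx⟩

end HenigPoints

section ConicNeighbourhood

variable {C : Set X} {g : X →L[ℝ] ℝ} {β α : ℝ}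

theorem isCone_coneGen (S : Set X) : IsCone (coneGen S) :=
  fun l hl _ ⟨m, hm, a, ha, h⟩ => ⟨l * m, mul_nonneg hl hm, a, ha, by rw [h, mul_smul]⟩

theorem inter_sphere_subset_epsCone (hα : 0 ≤ α) : C ∩ sphere 0 1 ⊆ epsCone C α :=
  fun c hc => ⟨1, zero_le_one, c, by simpa [infDist_zero_of_mem hc] using hα, (one_smul ℝ c).symm⟩

theorem exists_norm_sub_le_of_mem_epsCone (hC : IsCone C) (hne : (C ∩ sphere 0 1).Nonempty)
    (hα : 0 < α) (hα4 : α ≤ 1 / 4) {z : X} (hz : z ∈ epsCone C α) :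
    ∃ c ∈ C, ‖z - c‖ ≤ 4 * α * ‖z‖ := by
  obtain ⟨l, hl, a, ha, rfl⟩ := hz
  obtain ⟨k, ⟨hkC, hk⟩, hak⟩ := (infDist_lt_iff hne).1 (ha.trans_lt (lt_two_mul_self hα))
  rw [mem_sphere_zero_iff_norm] at hk
  rw [dist_eq_norm] at hak
  have ha : 1 / 2 ≤ ‖a‖ := by linarith [norm_sub_norm_le k a, norm_sub_rev a k]
  refine ⟨l • k, hC hl hkC, ?_⟩
  rw [← smul_sub, norm_smul, norm_smul, Real.norm_of_nonneg hl]
  calc l * ‖a - k‖ ≤ l * (2 * α) := by gcongr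
    _ ≤ l * (4 * α * ‖a‖) := by nlinarith [mul_nonneg (mul_nonneg hl hα.le) (sub_nonneg.2 ha)]
    _ = 4 * α * (l * ‖a‖) := by ring

theorem sub_mul_le_apply_of_norm_sub_le (hβ : 0 ≤ β) (hg : ∀ c ∈ C, β * ‖c‖ ≤ g c) {c z : X}
    (hc : c ∈ C) {r : ℝ} (hzc : ‖z - c‖ ≤ r) : β * ‖z‖ - (β + ‖g‖) * r ≤ g z := by
  have hgzc : -(‖g‖ * r) ≤ g z - g c := by
    rw [← map_sub]
    exact neg_le_of_abs_le ((g.le_opNorm _).trans (by gcongr))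
  have hzc' : β * (‖z‖ - r) ≤ β * ‖c‖ := by
    gcongr
    linarith [norm_sub_norm_le z c]
  linarith [hg c hc]

end ConicNeighbourhood

section StrictSeparation

variable {C K : Set X} {g : X →L[ℝ] ℝ} {β : ℝ}

theorem SSP.exists_separating_functional (hssp : SSP C K) (hne : (C ∩ sphere 0 1).Nonempty) :
    ∃ (g : X →L[ℝ] ℝ) (β : ℝ), 0 < β ∧ (∀ c ∈ C ∩ sphere 0 1, β < g c) ∧
      ∀ w ∈ frontier K ∩ sphere 0 1, g w < β := by
  obtain ⟨f, u, hfu, hu⟩ := geometric_hahn_banach_closed_point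
    ((convex_convexHull ℝ _).sub (convex_convexHull ℝ _)).closure isClosed_closure hssp
  rw [map_zero] at hu
  have hsep : ∀ c ∈ C ∩ sphere 0 1, ∀ w ∈ frontier K ∩ sphere 0 1 ∪ {0}, f c < f w + u :=
    fun c hc w hw => by
      have := hfu _ (subset_closure (sub_mem_sub (subset_convexHull ℝ _ hc)
        (subset_convexHull ℝ _ hw)))
      rw [map_sub] at this
      linarith
  have hfne : (f '' (C ∩ sphere 0 1)).Nonempty := hne.image f
  have hbdd : ∀ w ∈ frontier K ∩ sphere 0 1 ∪ {0}, sSup (f '' (C ∩ sphere 0 1)) ≤ f w + u :=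
    fun w hw => csSup_le hfne (forall_mem_image.2 fun c hc => (hsep c hc w hw).le)
  have hle : ∀ c ∈ C ∩ sphere 0 1, f c ≤ sSup (f '' (C ∩ sphere 0 1)) := fun c hc =>
    le_csSup ⟨f 0 + u, forall_mem_image.2 fun c hc => (hsep c hc 0 (Or.inr rfl)).le⟩
      (mem_image_of_mem f hc)
  have hm := hbdd 0 (Or.inr rfl)
  rw [map_zero, zero_add] at hm
  -- On unit vectors, `-f` is larger on `C` than on `bd K` by more than `-u > 0`; `β` splits the gap.
  refine ⟨-f, u / 2 - sSup (f '' (C ∩ sphere 0 1)), by linarith, fun c hc => ?_, fun w hw => ?_⟩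
  · simp only [neg_apply]
    linarith [hle c hc]
  · simp only [neg_apply]
    linarith [hbdd w (Or.inl hw)]

theorem IsCone.mul_norm_lt_apply (hC : IsCone C) (hCg : ∀ c ∈ C ∩ sphere 0 1, β < g c) :
    ∀ x ∈ C, x ≠ 0 → β * ‖x‖ < g x := fun x hx hx0 => by
  have := hCg _ (hC.inv_norm_smul_mem hx hx0)
  rwa [map_smul, smul_eq_mul, lt_inv_mul_iff₀ (norm_pos_iff.2 hx0), mul_comm] at this

theorem BPCone_subset_of_lt_on_frontier (hK : IsCone K) (hβ : 0 < β) {c₀ : X} (hc₀K : c₀ ∈ K)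
    (hc₀ : c₀ ∈ BPCone g β) (hc₀0 : c₀ ≠ 0) (hfr : ∀ w ∈ frontier K ∩ sphere 0 1, g w < β) :
    BPCone g β ⊆ K := by
  have hpos : ∀ y ∈ BPCone g β, y ≠ 0 → 0 < g y := fun y hy hy0 =>
    (mul_pos hβ (norm_pos_iff.2 hy0)).trans_le hy
  intro x hx
  by_contra hxK
  have hx0 : x ≠ 0 := fun h => hxK (h ▸ hK.zero_mem ⟨c₀, hc₀K⟩)
  obtain ⟨u, hu, huK⟩ := (convex_segment x c₀).isPreconnected.inter_frontier_nonempty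
    ⟨c₀, right_mem_segment ℝ x c₀, hc₀K⟩ ⟨x, left_mem_segment ℝ x c₀, hxK⟩
  have hu0 : u ≠ 0 := by
    have : 0 < g u := (convex_halfSpace_gt g.toLinearMap.isLinear 0).segment_subset
      (hpos x hx hx0) (hpos c₀ hc₀ hc₀0) hu
    rintro rfl
    simp at this
  have hv := BPCone.isCone.inv_norm_smul_mem ((BPCone.convex hβ.le).segment_subset hx hc₀ hu) hu0
  have hvK := hfr _ ⟨hK.smul_mem_frontier (inv_pos.2 (norm_pos_iff.2 hu0)) huK, hv.2⟩
  have hvB : β * ‖‖u‖⁻¹ • u‖ ≤ g (‖u‖⁻¹ • u) := hv.1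
  rw [mem_sphere_zero_iff_norm.1 hv.2, mul_one] at hvB
  linarith

theorem SSP.exists_memAugDualSharpPlus_BPCone_subset {α : ℝ} (hssp : SSP C (epsCone C α))
    (hC : IsCone C) (hne : (C ∩ sphere 0 1).Nonempty) (hα : 0 ≤ α) :
    ∃ (g : X →L[ℝ] ℝ) (β : ℝ), MemAugDualSharpPlus C g β ∧ BPCone g β ⊆ epsCone C α := by
  obtain ⟨g, β, hβ, hCg, hfr⟩ := hssp.exists_separating_functional hne
  obtain ⟨c₀, hc₀⟩ := hne
  have hlt := hC.mul_norm_lt_apply hCg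
  have hc₀0 : c₀ ≠ 0 := ne_zero_of_mem_unit_sphere ⟨c₀, hc₀.2⟩
  refine ⟨g, β, ⟨fun x hx hx0 => (mul_pos hβ (norm_pos_iff.2 hx0)).trans (hlt x hx hx0), hβ, hlt⟩,
    BPCone_subset_of_lt_on_frontier (isCone_coneGen _) hβ (inter_sphere_subset_epsCone hα hc₀)
      (hlt c₀ hc₀.1 hc₀0).le hc₀0 hfr⟩

end StrictSeparation

theorem MemAugDualSharpPlus.mul_norm_le {C : Set X} {g : X →L[ℝ] ℝ} {β : ℝ}
    (hg : MemAugDualSharpPlus C g β) : ∀ c ∈ C, β * ‖c‖ ≤ g c := fun c hc => by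
  rcases eq_or_ne c 0 with rfl | hc0
  · simp
  · exact (hg.2.2 c hc hc0).le

theorem eventually_epsCone_subset {C : Set X} (hC : IsCone C) (hne : (C ∩ sphere 0 1).Nonempty)
    {g : X →L[ℝ] ℝ} {β : ℝ} (hg : MemAugDualSharpPlus C g β) {η : ℝ} (hη : 0 < η) :
    ∀ᶠ α in 𝓝[>] 0, epsCone C α ⊆ BPCone g (β / 2) ∩ {w | infDist w C ≤ η * g w} := by
  have hβ := hg.2.1
  filter_upwards [eventually_mem_nhdsWithin, eventually_mul_lt_nhdsGT_zero 4 one_pos,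
    eventually_mul_lt_nhdsGT_zero (4 * (β + ‖g‖)) (half_pos hβ),
    eventually_mul_lt_nhdsGT_zero 8 (mul_pos hη hβ)] with α hα0 hα4 hαg hαη w hw
  obtain ⟨c, hc, hwc⟩ := exists_norm_sub_le_of_mem_epsCone hC hne hα0 (by linarith) hw
  have hgw := sub_mul_le_apply_of_norm_sub_le hβ.le hg.mul_norm_le hc hwc
  have hhalf : β / 2 * ‖w‖ ≤ g w := by nlinarith [norm_nonneg w]
  refine ⟨hhalf, ?_⟩
  calc infDist w C ≤ 4 * α * ‖w‖ :=
        (infDist_le_dist_of_mem hc).trans_eq (dist_eq_norm _ _) |>.trans hwc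
    _ ≤ η * g w := by
        nlinarith [mul_le_mul_of_nonneg_right hαη.le (norm_nonneg w),
          mul_le_mul_of_nonneg_left hhalf hη.le]

theorem exists_mul_apply_lt_infDist_of_mem_minSet {C A : Set X} (hCconv : Convex ℝ C)
    (hcl : IsClosed C) (hC0 : (0 : X) ∈ C) (hA : WeaklyCompact A) {x : X} (hx : x ∈ MinSet A C)
    (g : X →L[ℝ] ℝ) {τ : ℝ} (hτ : 0 < τ) :
    ∃ η > 0, ∀ z ∈ A, τ ≤ g (x - z) → η * g (x - z) < infDist (x - z) C := by
  by_contra! h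
  set Q : ℕ → Set X := fun n =>
    {w | τ ≤ g w} ∩ {w | infDist w C ≤ ((1 / ((n : ℝ) + 1)) • g) w}
  have hQ : ∀ n : ℕ, (A ∩ (x - ·) ⁻¹' Q n).Nonempty := fun n => by
    obtain ⟨z, hzA, hzτ, hzC⟩ := h (1 / ((n : ℝ) + 1)) (by positivity)
    exact ⟨z, hzA, hzτ, by simpa using hzC⟩
  have hconvQ : ∀ n, Convex ℝ ((x - ·) ⁻¹' Q n) := fun n =>
    ((convex_halfSpace_ge g.toLinearMap.isLinear τ).inter
      (hCconv.convex_setOf_infDist_le _)).affine_preimage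
      (AffineMap.const ℝ X x - AffineMap.id ℝ X)
  have hclQ : ∀ n, IsClosed ((x - ·) ⁻¹' Q n) := fun n =>
    ((isClosed_le continuous_const g.continuous).inter
      (isClosed_le (continuous_infDist_pt C) (ContinuousLinearMap.continuous _))).preimage
      (continuous_sub_left x)
  have hanti : Antitone Q := by
    intro i j hij w ⟨hτw, hw⟩
    refine ⟨hτw, le_trans (b := ((1 / ((j : ℝ) + 1)) • g) w) hw ?_⟩
    simp only [smul_apply, smul_eq_mul]
    exact mul_le_mul_of_nonneg_right (by gcongr) (hτ.le.trans hτw)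
  obtain ⟨y, hyA, hyQ⟩ := hA.inter_iInter_nonempty hconvQ hclQ fun u => by
    obtain ⟨z, hzA, hzQ⟩ := hQ (u.sup id)
    exact ⟨z, hzA, mem_iInter₂.2 fun i hi => hanti (Finset.le_sup (f := id) hi) hzQ⟩
  rw [mem_iInter] at hyQ
  have hlim : Tendsto (fun n : ℕ => ((1 / ((n : ℝ) + 1)) • g) (x - y)) atTop (𝓝 0) := by
    simpa using tendsto_one_div_add_atTop_nhds_zero_nat.mul_const (g (x - y))
  have hxy : x - y ∈ C := (hcl.mem_iff_infDist_zero ⟨0, hC0⟩).2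
    (le_antisymm (ge_of_tendsto' hlim fun n => (hyQ n).2) infDist_nonneg)
  have hτy : τ ≤ g (x - y) := (hyQ 0).1
  rw [((mem_minSet_iff hC0).1 hx).2 y hyA hxy, sub_self, map_zero] at hτy
  exact hτy.not_gt hτ

theorem eventually_norm_sub_lt_of_mem_minSet {C A : Set X} (hC : IsCone C) (hCconv : Convex ℝ C)
    (hcl : IsClosed C) (hne : (C ∩ sphere 0 1).Nonempty) {g₀ : X →L[ℝ] ℝ} {β₀ : ℝ}
    (hg₀ : MemAugDualSharpPlus C g₀ β₀) (hA : WeaklyCompact A) {x : X}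
    (hx : x ∈ MinSet A C) {ε : ℝ} (hε : 0 < ε) :
    ∀ᶠ α in 𝓝[>] 0, ∀ z ∈ A, x - z ∈ epsCone C α → ‖x - z‖ < ε := by
  obtain ⟨η, hη, hfar⟩ := exists_mul_apply_lt_infDist_of_mem_minSet hCconv hcl
    (hC.zero_mem (hne.mono inter_subset_left)) hA hx g₀ (mul_pos (half_pos hg₀.2.1) hε)
  filter_upwards [eventually_epsCone_subset hC hne hg₀ hη] with α hα z hzA hz
  obtain ⟨hzB, hzC⟩ := hα hz
  by_contra! hzε
  exact (hfar z hzA ((mul_le_mul_of_nonneg_left hzε (half_pos hg₀.2.1).le).trans hzB)).not_ge hzC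

end HenigPaper

theorem stmt19_general (C : Set X) (hC : NontrivialCone C)
    (hconv : ConeConvex C) (hcl : IsClosed C) (A : Set X)
    (hssp : ∀ α : ℝ, 0 < α → α < 1 → SSP C (epsCone C α))
    (hcpt : WeaklyCompact A) :
    MinSet A C ⊆ closure (GHe A C) := by
  have hne := hC.inter_sphere_nonempty
  have hdual : ∀ α : ℝ, 0 < α → α < 1 →
      ∃ (g : X →L[ℝ] ℝ) (β : ℝ), MemAugDualSharpPlus C g β ∧ BPCone g β ⊆ epsCone C α :=
    fun α hα0 hα1 => (hssp α hα0 hα1).exists_memAugDualSharpPlus_BPCone_subset hC.1 hne hα0.le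
  obtain ⟨g₀, β₀, hg₀, -⟩ := hdual (1 / 2) one_half_pos one_half_lt_one
  intro x hx
  refine Metric.mem_closure_iff.2 fun ε hε => ?_
  obtain ⟨α, hloc, hα0, hα1⟩ := ((eventually_norm_sub_lt_of_mem_minSet hC.1 (hC.1.convex hconv)
    hcl hne hg₀ hcpt hx hε).and (eventually_mem_nhdsWithin.and
      (nhdsWithin_le_nhds (gt_mem_nhds one_pos)))).exists
  obtain ⟨g, β, hg, hsub⟩ := hdual α hα0 hα1
  obtain ⟨x₀, hx₀, hxx₀⟩ := hcpt.exists_mem_minSet_BPCone hg.2.1 hx.1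
  exact ⟨x₀, mem_GHe_of_mem_minSet_BPCone hg hx₀, by
    rw [dist_eq_norm]; exact hloc x₀ hx₀.1 (hsub hxx₀)⟩

/-- Density of Henig global proper efficient points in the efficient set for
weakly compact sets. -/
theorem stmt19 (C : Set X) (hC : NontrivialCone C) (hpt : PointedCone' C)
    (hconv : ConeConvex C) (hcl : IsClosed C) (A : Set X)
    (hssp : ∀ α : ℝ, 0 < α → α < 1 → SSP C (epsCone C α))
    (hcpt : WeaklyCompact A) :
    MinSet A C ⊆ closure (GHe A C) :=
  stmt19_general C hC hconv hcl A hssp hcpt
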